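/- arXiv:1505.06881 — 2 statements merged into one kernel-verified Lean document; each statement's English description precedes it below -/
import Mathlib

section
/- Let q be a nondegenerate real quadratic form on ℝ⁴ of signature (2,2) and let g ∈ SO(q). If g has a real eigenvalue α with |α| ≠ 1, then g has no non-real complex eigenvalue of absolute value 1. -/
/-! Complexify `g`. Eigenvectors `v₁, v₂` for `α, α⁻¹` (real) and `w, w̄` for `z, z̄` form a basis,
since the four eigenvalues are distinct. As `g` preserves `q`, eigenvectors whose eigenvalues
have product `≠ 1` are `q`-orthogonal, so the Gram matrix `G` of this basis only pairs `v₁` with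
`v₂` and `w` with `w̄`, and `det G = |q(v₁, v₂)|² |q(w, w̄)|² ≥ 0`. On the other hand
`det G = det q · (det P)²` for the matrix `P` of the basis, and complex conjugation swaps the rows
`w, w̄` of `P`, so `det P` is purely imaginary and `(det P)² < 0`. Hence `det q ≤ 0`, whereas
signature `(2,2)` forces `det q > 0`. -/

open Matrix Module.End ComplexConjugate

theorem injective_ofReal_inv_conj {α : ℝ} {z : ℂ} (hα₀ : α ≠ 0) (hα : |α| ≠ 1)
    (hz_im : z.im ≠ 0) : Function.Injective ![(α : ℂ), (α : ℂ)⁻¹, z, conj z] := by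
  have h1 : (α : ℂ) ≠ (α : ℂ)⁻¹ := by
    intro h
    have h' : α * α = 1 := by
      have : α = α⁻¹ := by exact_mod_cast h
      rw [← mul_inv_cancel₀ hα₀, ← this]
    rcases mul_self_eq_one_iff.1 h' with rfl | rfl <;> simp at hα
  have hz_real : ∀ r : ℝ, (r : ℂ) ≠ z := fun r h => hz_im (by simp [← h])
  have hz_conj_real : ∀ r : ℝ, (r : ℂ) ≠ conj z := fun r h =>
    hz_im (by simpa using congrArg Complex.im h.symm)
  have h2 : (α : ℂ)⁻¹ ≠ z := by exact_mod_cast hz_real α⁻¹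
  have h3 : (α : ℂ)⁻¹ ≠ conj z := by exact_mod_cast hz_conj_real α⁻¹
  have h4 : z ≠ conj z := fun h => hz_im (by simpa using Complex.conj_eq_iff_im.1 h.symm)
  intro i j h
  fin_cases i <;> fin_cases j <;> simp_all [eq_comm]

namespace Matrix

variable {n : Type*} [Fintype n]

section Field

variable {K : Type*} [Field K] {S A : Matrix n n K}

theorem dotProduct_mulVec_eq_zero_of_transpose_mul_mul_eq (hA : Aᵀ * S * A = S)
    {x y : n → K} {a b : K} (hx : A *ᵥ x = a • x) (hy : A *ᵥ y = b • y) (hab : a * b ≠ 1) :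
    x ⬝ᵥ S *ᵥ y = 0 := by
  have hinv : (A *ᵥ x) ⬝ᵥ S *ᵥ (A *ᵥ y) = x ⬝ᵥ S *ᵥ y := by
    rw [mulVec_mulVec, dotProduct_mulVec, ← vecMul_transpose, vecMul_vecMul, ← Matrix.mul_assoc,
      hA, ← dotProduct_mulVec]
  rw [hx, hy, mulVec_smul, smul_dotProduct, dotProduct_smul, smul_smul, smul_eq_mul] at hinv
  have : (a * b - 1) * (x ⬝ᵥ S *ᵥ y) = 0 := by linear_combination hinv
  exact (mul_eq_zero.1 this).resolve_left (sub_ne_zero.2 hab)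

theorem hasEigenvector_map {L : Type*} [Field L] (f : K →+* L) {a : K} {x : n → K}
    (hx : HasEigenvector A.mulVecLin a x) :
    HasEigenvector (A.map f).mulVecLin (f a) (f ∘ x) := by
  refine ⟨mem_eigenspace_iff.2 ?_, fun h => hx.2 (funext fun i => f.injective ?_)⟩
  · ext i
    have hAx : A *ᵥ x = a • x := hx.apply_eq_smul
    rw [mulVecLin_apply, ← RingHom.map_mulVec, hAx]
    simp
  · simpa using congrFun h i

theorem smul_transpose_mulVec_mulVec_of_hasEigenvector (hA : Aᵀ * S * A = S) {a : K}
    {x : n → K} (hx : HasEigenvector A.mulVecLin a x) : a • (Aᵀ *ᵥ S *ᵥ x) = S *ᵥ x := by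
  have hAx : A *ᵥ x = a • x := hx.apply_eq_smul
  calc a • (Aᵀ *ᵥ S *ᵥ x) = Aᵀ *ᵥ S *ᵥ A *ᵥ x := by rw [hAx, mulVec_smul, mulVec_smul]
    _ = S *ᵥ x := by rw [mulVec_mulVec, mulVec_mulVec, hA]

variable [DecidableEq n]

theorem ne_zero_of_hasEigenvector (hA : Aᵀ * S * A = S) (hS : IsUnit S) {a : K} {x : n → K}
    (hx : HasEigenvector A.mulVecLin a x) : a ≠ 0 := by
  rintro rfl
  refine hx.2 (mulVec_injective_iff_isUnit.2 hS ?_)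
  simpa using (smul_transpose_mulVec_mulVec_of_hasEigenvector hA hx).symm

theorem hasEigenvector_transpose_inv (hA : Aᵀ * S * A = S) (hS : IsUnit S) {a : K}
    {x : n → K} (hx : HasEigenvector A.mulVecLin a x) :
    HasEigenvector Aᵀ.mulVecLin a⁻¹ (S *ᵥ x) := by
  refine ⟨mem_eigenspace_iff.2 ?_,
    ((mulVec_injective_iff_isUnit.2 hS).ne_iff' (mulVec_zero S)).2 hx.2⟩
  rw [mulVecLin_apply, eq_inv_smul_iff₀ (ne_zero_of_hasEigenvector hA hS hx),
    smul_transpose_mulVec_mulVec_of_hasEigenvector hA hx]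

theorem isRoot_charpoly_iff_hasEigenvalue (A : Matrix n n K) (μ : K) :
    A.charpoly.IsRoot μ ↔ HasEigenvalue A.mulVecLin μ := by
  rw [hasEigenvalue_iff_isRoot_charpoly, charpoly_mulVecLin]

theorem isRoot_charpoly_inv (hA : Aᵀ * S * A = S) (hS : IsUnit S) {a : K}
    (ha : A.charpoly.IsRoot a) : A.charpoly.IsRoot a⁻¹ := by
  obtain ⟨x, hx⟩ := ((isRoot_charpoly_iff_hasEigenvalue A a).1 ha).exists_hasEigenvector
  rw [← charpoly_transpose, isRoot_charpoly_iff_hasEigenvalue]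
  exact hasEigenvalue_of_hasEigenvector (hasEigenvector_transpose_inv hA hS hx)

end Field

theorem map_mul_mul_transpose_of_map_eq_submatrix {R : Type*} [CommRing R] (f : R →+* R)
    {P S : Matrix n n R} {τ : Equiv.Perm n} (hS : S.map f = S) (hP : P.map f = P.submatrix τ id) :
    (P * S * Pᵀ).map f = (P * S * Pᵀ).submatrix τ τ := by
  rw [Matrix.map_mul, Matrix.map_mul, hS, transpose_map, hP]
  ext i j
  simp only [submatrix_apply, mul_mul_apply, transpose_transpose, transpose_submatrix]
  rfl

variable [DecidableEq n]

theorem det_pos_of_transpose_mul_mul_eq {R : Type*} [CommRing R] [LinearOrder R]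
    [IsStrictOrderedRing R] {P Q D : Matrix n n R} (h : Pᵀ * Q * P = D) (hD : 0 < D.det) :
    0 < Q.det := by
  rw [← h, det_mul, det_mul, det_transpose, mul_right_comm] at hD
  exact pos_of_mul_pos_right hD (mul_self_nonneg _)

theorem det_eq_sign_mul_prod_of_apply_eq_zero {R : Type*} [CommRing R] {G : Matrix n n R}
    (σ : Equiv.Perm n) (h : ∀ i j, j ≠ σ i → G i j = 0) :
    G.det = σ.sign * ∏ i, G i (σ i) := by
  have hG : G = (diagonal fun i => G i (σ i)).submatrix id σ.symm := by
    ext i j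
    by_cases hj : j = σ i
    · simp [hj]
    · simp [h i j hj, Equiv.eq_symm_apply, Ne.symm hj]
  rw [hG, det_permute', det_diagonal, Equiv.Perm.sign_symm]
  simp

theorem det_sq_eq_neg_normSq {P : Matrix n n ℂ} {τ : Equiv.Perm n} (hτ : τ.sign = -1)
    (hP : P.map conj = P.submatrix τ id) : P.det ^ 2 = -(Complex.normSq P.det : ℂ) := by
  have h : conj P.det = -P.det := by
    rw [RingHom.map_det, RingHom.mapMatrix_apply, hP, det_permute, hτ]
    simp
  rw [← Complex.mul_conj, h]
  ring

theorem det_eq_normSq_mul_normSq {G : Matrix (Fin 4) (Fin 4) ℂ} (hG : G.IsSymm)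
    (hzero : ∀ i j, j ≠ (Equiv.swap 0 1 * Equiv.swap 2 3 : Equiv.Perm (Fin 4)) i → G i j = 0)
    (hconj : G.map conj = G.submatrix (Equiv.swap 2 3) (Equiv.swap 2 3)) :
    G.det = Complex.normSq (G 0 1) * Complex.normSq (G 2 3) := by
  have h01 : conj (G 0 1) = G 0 1 := by
    simpa [Equiv.swap_apply_def] using congrFun (congrFun hconj 0) 1
  have h23 : conj (G 2 3) = G 2 3 := by
    simpa [Equiv.swap_apply_def, hG.apply 2 3] using congrFun (congrFun hconj 2) 3
  have hsign : (Equiv.swap 0 1 * Equiv.swap 2 3 : Equiv.Perm (Fin 4)).sign = 1 := by decide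
  rw [det_eq_sign_mul_prod_of_apply_eq_zero _ hzero, hsign, Fin.prod_univ_four]
  simp only [Equiv.Perm.mul_apply, Equiv.swap_apply_def, Fin.isValue, Fin.reduceEq, ↓reduceIte,
    Units.val_one, Int.cast_one, one_mul]
  rw [hG.apply 0 1, hG.apply 2 3, ← Complex.mul_conj, ← Complex.mul_conj, h01, h23]
  ring

theorem det_nonpos_of_eigenbasis {Q g : Matrix (Fin 4) (Fin 4) ℝ} (hQ : Q.IsSymm)
    (hg : gᵀ * Q * g = Q) {μ : Fin 4 → ℂ} {u : Fin 4 → Fin 4 → ℂ}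
    (hu : ∀ i, HasEigenvector (g.map (algebraMap ℝ ℂ)).mulVecLin (μ i) (u i))
    (hμ : Function.Injective μ)
    (hμ_inv : ∀ i, μ ((Equiv.swap 0 1 * Equiv.swap 2 3 : Equiv.Perm (Fin 4)) i) = (μ i)⁻¹)
    (hu_star : ∀ i, star (u i) = u (Equiv.swap 2 3 i)) :
    Q.det ≤ 0 := by
  set S := Q.map (algebraMap ℝ ℂ)
  set P := of u
  have hP : P.det ≠ 0 := (P.isUnit_iff_isUnit_det.1 <| linearIndependent_rows_iff_isUnit.1 <|
    eigenvectors_linearIndependent' _ μ hμ u hu).ne_zero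
  have hPconj : P.map conj = P.submatrix (Equiv.swap 2 3) id := by
    ext i j
    exact congrFun (hu_star i) j
  have hGsymm : (P * S * Pᵀ).IsSymm := by
    rw [IsSymm, transpose_mul, transpose_mul, transpose_transpose, (hQ.map _).eq, Matrix.mul_assoc]
  have hGzero : ∀ i j, j ≠ (Equiv.swap 0 1 * Equiv.swap 2 3 : Equiv.Perm (Fin 4)) i →
      (P * S * Pᵀ) i j = 0 := by
    intro i j hij
    rw [mul_mul_apply, transpose_transpose]
    refine dotProduct_mulVec_eq_zero_of_transpose_mul_mul_eq ?_ (hu i).apply_eq_smul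
      (hu j).apply_eq_smul fun h => hij (hμ ?_)
    · rw [← transpose_map, ← Matrix.map_mul, ← Matrix.map_mul, hg]
    · rw [hμ_inv, eq_inv_of_mul_eq_one_right h]
  have hGconj := map_mul_mul_transpose_of_map_eq_submatrix (starRingEnd ℂ)
    (by ext; simp [S] : S.map conj = S) hPconj
  have hdet : (Q.det : ℂ) * -(Complex.normSq P.det : ℂ) =
      Complex.normSq ((P * S * Pᵀ) 0 1) * Complex.normSq ((P * S * Pᵀ) 2 3) := by
    rw [← det_sq_eq_neg_normSq (by decide) hPconj,
      ← det_eq_normSq_mul_normSq hGsymm hGzero hGconj, det_mul, det_mul, det_transpose,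
      show S.det = Q.det from ((algebraMap ℝ ℂ).map_det Q).symm]
    ring
  have hdet_real : Q.det * -Complex.normSq P.det =
      Complex.normSq ((P * S * Pᵀ) 0 1) * Complex.normSq ((P * S * Pᵀ) 2 3) := by
    exact_mod_cast hdet
  nlinarith [Complex.normSq_pos.2 hP, mul_nonneg (Complex.normSq_nonneg ((P * S * Pᵀ) 0 1))
    (Complex.normSq_nonneg ((P * S * Pᵀ) 2 3))]

theorem det_nonpos_of_hasEigenvector {Q g : Matrix (Fin 4) (Fin 4) ℝ} (hQ : Q.IsSymm)
    (hg : gᵀ * Q * g = Q) {α : ℝ} (hα₀ : α ≠ 0) (hα : |α| ≠ 1) {z : ℂ} (hz_im : z.im ≠ 0)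
    (hz_norm : ‖z‖ = 1) {v₁ v₂ : Fin 4 → ℝ} {w : Fin 4 → ℂ}
    (hv₁ : HasEigenvector g.mulVecLin α v₁) (hv₂ : HasEigenvector g.mulVecLin α⁻¹ v₂)
    (hw : HasEigenvector (g.map (algebraMap ℝ ℂ)).mulVecLin z w) : Q.det ≤ 0 := by
  have hw_star : HasEigenvector (g.map (algebraMap ℝ ℂ)).mulVecLin (conj z) (star w) := by
    have h := hasEigenvector_map (starRingEnd ℂ) hw
    rwa [Matrix.map_map, show ⇑(starRingEnd ℂ) ∘ algebraMap ℝ ℂ = algebraMap ℝ ℂ from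
      funext Complex.conj_ofReal] at h
  refine det_nonpos_of_eigenbasis hQ hg (μ := ![(α : ℂ), (α : ℂ)⁻¹, z, conj z])
    (u := ![algebraMap ℝ ℂ ∘ v₁, algebraMap ℝ ℂ ∘ v₂, w, star w]) ?_
    (injective_ofReal_inv_conj hα₀ hα hz_im) ?_ ?_
  · intro i
    fin_cases i
    · exact hasEigenvector_map _ hv₁
    · simpa using hasEigenvector_map (algebraMap ℝ ℂ) hv₂
    · exact hw
    · exact hw_star
  · intro i
    fin_cases i <;> simp [Equiv.swap_apply_def, ← Complex.inv_eq_conj hz_norm]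
  · intro i
    fin_cases i <;> ext <;> simp [Equiv.swap_apply_def]

end Matrix

theorem stmt5_general (Q g : Matrix (Fin 4) (Fin 4) ℝ)
    (hQsymm : Q.IsSymm)
    (hsig : ∃ P : Matrix (Fin 4) (Fin 4) ℝ, IsUnit P.det ∧
      Pᵀ * Q * P = Matrix.diagonal ![1, 1, -1, -1])
    (hg : gᵀ * Q * g = Q)
    (α : ℝ) (hα : g.charpoly.IsRoot α) (hα1 : |α| ≠ 1) :
    ∀ z : ℂ, z.im ≠ 0 → ‖z‖ = 1 →
      ¬ ((g.map (algebraMap ℝ ℂ)).charpoly).IsRoot z := by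
  intro z hz_im hz_norm hz
  obtain ⟨P, -, hP⟩ := hsig
  have hQ : 0 < Q.det := det_pos_of_transpose_mul_mul_eq hP (by simp [Fin.prod_univ_four])
  have hQ_unit : IsUnit Q := Q.isUnit_iff_isUnit_det.2 hQ.ne'.isUnit
  obtain ⟨v₁, hv₁⟩ := ((isRoot_charpoly_iff_hasEigenvalue g α).1 hα).exists_hasEigenvector
  obtain ⟨v₂, hv₂⟩ := ((isRoot_charpoly_iff_hasEigenvalue g α⁻¹).1
    (isRoot_charpoly_inv hg hQ_unit hα)).exists_hasEigenvector
  obtain ⟨w, hw⟩ := ((isRoot_charpoly_iff_hasEigenvalue _ z).1 hz).exists_hasEigenvector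
  exact (det_nonpos_of_hasEigenvector hQsymm hg (ne_zero_of_hasEigenvector hg hQ_unit hv₁) hα1
    hz_im hz_norm hv₁ hv₂ hw).not_gt hQ

/-- An element of `SO(q)` for a signature `(2,2)` form on `ℝ⁴` with a real
eigenvalue of absolute value `≠ 1` has no non-real eigenvalue of absolute value 1. -/
theorem stmt5 (Q g : Matrix (Fin 4) (Fin 4) ℝ)
    (hQsymm : Q.IsSymm)
    (hsig : ∃ P : Matrix (Fin 4) (Fin 4) ℝ, IsUnit P.det ∧
      Pᵀ * Q * P = Matrix.diagonal ![1, 1, -1, -1])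
    (hg : gᵀ * Q * g = Q) (hdet : g.det = 1)
    (α : ℝ) (hα : g.charpoly.IsRoot α) (hα1 : |α| ≠ 1) :
    ∀ z : ℂ, z.im ≠ 0 → ‖z‖ = 1 →
      ¬ ((g.map (algebraMap ℝ ℂ)).charpoly).IsRoot z :=
  stmt5_general Q g hQsymm hsig hg α hα hα1
end

section
/- Let g be an element of the orthogonal group of a nondegenerate symmetric bilinear form on ℝ⁴. Then g cannot have Jordan type [2,1,1] with the 2×2 block having eigenvalue α and the two 1×1 blocks both having eigenvalue 1/α, for any real α ≠ 0. Concretely: there is no basis (v₁,v₂,v₃,v₄) of ℝ⁴ with g v₁ = α v₁, g v₂ = α v₂ + v₁, g v₃ = (1/α) v₃, g v₄ = (1/α) v₄ for g preserving a nondegenerate symmetric bilinear form. -/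
/-!
Let `v = b 0` and `w = b 1` be the Jordan chain of `g` for `α`, so `g v = α v` and `g w = α w + v`. Expanding
`B (g x) (g y) = B x y` on pairs of these vectors shows that `v` is `B`-orthogonal to every
vector of the basis: against a `1/α`-eigenvector `y` the pairing of `w` with `y` cancels,
leaving `α⁻¹ B v y = 0`; against `v` and `w` one gets linear relations which force
`B v v = B v w = 0`, both when `α² ≠ 1` and, using symmetry of `B`, when `α² = 1`.
Hence `v` lies in the radical of `B`, contradicting nondegeneracy.
-/

namespace LinearMap.IsOrthogonal

section CommRing

variable {R M : Type*} [CommRing R] [AddCommGroup M] [Module R M]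
  {B : LinearMap.BilinForm R M} {g : M →ₗ[R] M}

theorem apply_eq_of_apply_eq_smul_add (hg : B.IsOrthogonal g) {a c : R} {x x' y y' : M}
    (hx : g x = a • x + x') (hy : g y = c • y + y') :
    B x y = a * c * B x y + a * B x y' + c * B x' y + B x' y' := by
  calc B x y = B (g x) (g y) := (hg x y).symm
    _ = _ := by
      rw [hx, hy]
      simp only [map_add, map_smul, LinearMap.add_apply, LinearMap.smul_apply, smul_eq_mul]
      ring

end CommRing

variable {K M : Type*} [Field K] [AddCommGroup M] [Module K M]
  {B : LinearMap.BilinForm K M} {g : M →ₗ[K] M} {α : K} {v w : M}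

theorem apply_eq_zero_of_apply_eq_inv_smul (hg : B.IsOrthogonal g) (hα : α ≠ 0)
    (hw : g w = α • w + v) {y : M} (hy : g y = α⁻¹ • y) : B v y = 0 := by
  have key := hg.apply_eq_of_apply_eq_smul_add hw (y' := 0) (by rw [hy, add_zero])
  simp only [map_zero, mul_zero, add_zero] at key
  have hvy : α⁻¹ * B v y = 0 := by linear_combination -key - B w y * mul_inv_cancel₀ hα
  exact (mul_eq_zero.mp hvy).resolve_left (inv_ne_zero hα)

theorem jordanChain_head_apply_eq_zero [NeZero (2 : K)] (hg : B.IsOrthogonal g)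
    (hsymm : ∀ x y, B x y = B y x) (hv : g v = α • v) (hw : g w = α • w + v) :
    B v v = 0 ∧ B v w = 0 := by
  have hv' : g v = α • v + 0 := by rw [hv, add_zero]
  have evv := hg.apply_eq_of_apply_eq_smul_add hv' hv'
  have ewv := hg.apply_eq_of_apply_eq_smul_add hw hv'
  have eww := hg.apply_eq_of_apply_eq_smul_add hw hw
  simp only [map_zero, LinearMap.zero_apply, mul_zero, add_zero] at evv ewv eww
  rw [hsymm w v] at ewv eww
  by_cases hα2 : α * α = 1
  · have hα0 : α ≠ 0 := left_ne_zero_of_mul_eq_one hα2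
    have hvv : B v v = 0 := (mul_eq_zero.mp (by
      linear_combination -ewv - B v w * hα2 : α * B v v = 0)).resolve_left hα0
    have hvw : B v w = 0 := (mul_eq_zero.mp (by
      linear_combination -eww - B w w * hα2 - hvv : 2 * α * B v w = 0)).resolve_left
      (mul_ne_zero two_ne_zero hα0)
    exact ⟨hvv, hvw⟩
  · have hα2 : α * α - 1 ≠ 0 := sub_ne_zero.mpr hα2
    have hvv : B v v = 0 := (mul_eq_zero.mp (by
      linear_combination -evv : (α * α - 1) * B v v = 0)).resolve_left hα2
    have hvw : B v w = 0 := (mul_eq_zero.mp (by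
      linear_combination -ewv - α * hvv : (α * α - 1) * B v w = 0)).resolve_left hα2
    exact ⟨hvv, hvw⟩

end LinearMap.IsOrthogonal

/-- No isometry of a nondegenerate symmetric bilinear form on `ℝ⁴` has Jordan
type `[2,1,1]` with eigenvalues `α, α, 1/α, 1/α` (block of size 2 for `α`). -/
theorem stmt8 (B : LinearMap.BilinForm ℝ (Fin 4 → ℝ))
    (hsymm : ∀ x y, B x y = B y x) (hnd : B.Nondegenerate)
    (g : (Fin 4 → ℝ) →ₗ[ℝ] (Fin 4 → ℝ))
    (hg : ∀ x y, B (g x) (g y) = B x y)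
    (α : ℝ) (hα : α ≠ 0)
    (b : Module.Basis (Fin 4) ℝ (Fin 4 → ℝ))
    (h1 : g (b 0) = α • b 0)
    (h2 : g (b 1) = α • b 1 + b 0)
    (h3 : g (b 2) = α⁻¹ • b 2)
    (h4 : g (b 3) = α⁻¹ • b 3) : False := by
  have hg : B.IsOrthogonal g := hg
  obtain ⟨h00, h01⟩ := hg.jordanChain_head_apply_eq_zero hsymm h1 h2
  have hB0 : B (b 0) = 0 := b.ext fun i => by
    fin_cases i
    exacts [h00, h01, hg.apply_eq_zero_of_apply_eq_inv_smul hα h2 h3,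
      hg.apply_eq_zero_of_apply_eq_inv_smul hα h2 h4]
  exact b.ne_zero 0 (hnd.1 _ fun y => by rw [hB0]; rfl)
end
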